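/- Let U ⊆ ℂⁿ be an open neighborhood of 0, let f : U → ℂ be smooth (infinitely differentiable as a function of the underlying real variables), and let A : U → Matrix(n,n,ℂ) be smooth, such that ∂f/∂z̄ᵢ(z) = Σ_{j=1}^{n} A_{ij}(z)·∂f/∂zⱼ(z) for every z ∈ U and every i = 1,…,n. Suppose that for some natural number m, all pure holomorphic partial derivatives of f of order at most m vanish at 0, i.e. ∂^{|α|}f/∂z^{α}(0) = 0 for every multi-index α with |α| ≤ m. Then all mixed Wirtinger partial derivatives of f of total order at most m vanish at 0, i.e. ∂^{|α|+|β|}f/∂z^{α}∂z̄^{β}(0) = 0 for all multi-indices α, β with |α| + |β| ≤ m; consequently every real partial derivative of f of order at most m vanishes at 0, so f vanishes to order at least m + 1 at 0. -/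

import Mathlib

open MeasureTheory Set Filter

/-- The Wirtinger derivative `∂f/∂zⱼ = ½(∂f/∂xⱼ − i·∂f/∂yⱼ)` of a function
`f : ℂⁿ → ℂ`, computed from the real Fréchet derivative: it equals
`½ (Df(eⱼ) − i·Df(i·eⱼ))` where `eⱼ` is the `j`-th standard basis vector. -/
noncomputable def wirtingerZ (n : ℕ) (j : Fin n) (f : (Fin n → ℂ) → ℂ) :
    (Fin n → ℂ) → ℂ := fun z =>
  (fderiv ℝ f z (Pi.single j 1) - Complex.I * fderiv ℝ f z (Pi.single j Complex.I)) / 2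

/-- The conjugate Wirtinger derivative `∂f/∂z̄ⱼ = ½(∂f/∂xⱼ + i·∂f/∂yⱼ)`. -/
noncomputable def wirtingerZBar (n : ℕ) (j : Fin n) (f : (Fin n → ℂ) → ℂ) :
    (Fin n → ℂ) → ℂ := fun z =>
  (fderiv ℝ f z (Pi.single j 1) + Complex.I * fderiv ℝ f z (Pi.single j Complex.I)) / 2

/-- Iterated Wirtinger derivative `∂^{|α|}/∂z^α` for a multi-index `α : Fin n → ℕ`:
apply `∂/∂zⱼ` exactly `α j` times, for `j = n-1` down to `j = 0`. -/
noncomputable def wirtingerZMulti (n : ℕ) (α : Fin n → ℕ) (f : (Fin n → ℂ) → ℂ) :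
    (Fin n → ℂ) → ℂ :=
  (List.finRange n).foldr (fun j g => (wirtingerZ n j)^[α j] g) f

/-- Iterated conjugate Wirtinger derivative `∂^{|β|}/∂z̄^β` for a multi-index `β`. -/
noncomputable def wirtingerZBarMulti (n : ℕ) (β : Fin n → ℕ) (f : (Fin n → ℂ) → ℂ) :
    (Fin n → ℂ) → ℂ :=
  (List.finRange n).foldr (fun j g => (wirtingerZBar n j)^[β j] g) f

namespace S10
open Topology
variable {n : ℕ} {U : Set (Fin n → ℂ)}

theorem diffAt (hU : IsOpen U) {g : (Fin n → ℂ) → ℂ} (hg : ContDiffOn ℝ (⊤ : ℕ∞) g U)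
    {z : Fin n → ℂ} (hz : z ∈ U) : DifferentiableAt ℝ g z :=
  (hg.contDiffAt (hU.mem_nhds hz)).differentiableAt (by simp)

theorem smooth_Dv (hU : IsOpen U) {g : (Fin n → ℂ) → ℂ} (hg : ContDiffOn ℝ (⊤ : ℕ∞) g U)
    (v : Fin n → ℂ) : ContDiffOn ℝ (⊤ : ℕ∞) (fun z => fderiv ℝ g z v) U :=
  (hg.fderiv_of_isOpen hU (by simp)).clm_apply contDiffOn_const

theorem fderiv_eqOn (hU : IsOpen U) {g h : (Fin n → ℂ) → ℂ} (hgh : EqOn g h U)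
    {z : Fin n → ℂ} (hz : z ∈ U) : fderiv ℝ g z = fderiv ℝ h z :=
  (hgh.eventuallyEq_of_mem (hU.mem_nhds hz)).fderiv_eq

theorem Dv_swap (hU : IsOpen U) {g : (Fin n → ℂ) → ℂ} (hg : ContDiffOn ℝ (⊤ : ℕ∞) g U)
    {z : Fin n → ℂ} (hz : z ∈ U) (v w : Fin n → ℂ) :
    fderiv ℝ (fun y => fderiv ℝ g y w) z v = fderiv ℝ (fun y => fderiv ℝ g y v) z w := by
  have hd1 : ContDiffOn ℝ (⊤ : ℕ∞) (fderiv ℝ g) U := hg.fderiv_of_isOpen hU (by simp)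
  have hdiff : DifferentiableAt ℝ (fderiv ℝ g) z :=
    (hd1.contDiffAt (hU.mem_nhds hz)).differentiableAt (by simp)
  have hev : ∀ᶠ y in 𝓝 z, HasFDerivAt g (fderiv ℝ g y) y := by
    filter_upwards [hU.mem_nhds hz] with y hy using (diffAt hU hg hy).hasFDerivAt
  have hsym := second_derivative_symmetric_of_eventually hev hdiff.hasFDerivAt
  have key : ∀ u : Fin n → ℂ, fderiv ℝ (fun y => fderiv ℝ g y u) z
      = (fderiv ℝ (fderiv ℝ g) z).flip u := by
    intro u
    rw [fderiv_clm_apply hdiff (differentiableAt_const u)]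
    simp
  rw [key w, key v]
  exact hsym v w

/-- generalized Wirtinger-type operator -/
noncomputable def Wg (c : ℂ) (j : Fin n) (g : (Fin n → ℂ) → ℂ) : (Fin n → ℂ) → ℂ := fun z =>
  (fderiv ℝ g z (Pi.single j 1) + c * fderiv ℝ g z (Pi.single j Complex.I)) / 2

theorem wirtingerZ_eq (j : Fin n) : wirtingerZ n j = Wg (-Complex.I) j := by
  funext g z; simp only [wirtingerZ, Wg]; ring

theorem wirtingerZBar_eq (j : Fin n) : wirtingerZBar n j = Wg Complex.I j := rfl

theorem smooth_Wg (hU : IsOpen U) {g : (Fin n → ℂ) → ℂ} (hg : ContDiffOn ℝ (⊤ : ℕ∞) g U)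
    (c : ℂ) (j : Fin n) : ContDiffOn ℝ (⊤ : ℕ∞) (Wg c j g) U :=
  ((smooth_Dv hU hg _).add (contDiffOn_const.mul (smooth_Dv hU hg _))).div_const _

theorem Wg_congr {g h : (Fin n → ℂ) → ℂ} (hU : IsOpen U) (hgh : EqOn g h U)
    (c : ℂ) (j : Fin n) : EqOn (Wg c j g) (Wg c j h) U := by
  intro z hz
  simp only [Wg, fderiv_eqOn hU hgh hz]

theorem fderiv_comb (hU : IsOpen U) {p q : (Fin n → ℂ) → ℂ} (hp : ContDiffOn ℝ (⊤ : ℕ∞) p U)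
    (hq : ContDiffOn ℝ (⊤ : ℕ∞) q U) (c : ℂ) {z : Fin n → ℂ} (hz : z ∈ U) (v : Fin n → ℂ) :
    fderiv ℝ (fun y => (p y + c * q y) / 2) z v
      = (fderiv ℝ p z v + c * fderiv ℝ q z v) / 2 := by
  have h1 := diffAt hU hp hz
  have h2 := diffAt hU hq hz
  rw [show (fun y => (p y + c * q y) / 2) = fun y => (2 : ℂ)⁻¹ * (p y + c * q y) by
    funext y; ring]
  rw [fderiv_const_mul (a := fun y => p y + c * q y) (h1.add (h2.const_mul c)), fderiv_fun_add h1 (h2.const_mul c),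
    fderiv_const_mul h2 c]
  simp [smul_eq_mul]
  ring

theorem Wg_swap (hU : IsOpen U) {g : (Fin n → ℂ) → ℂ} (hg : ContDiffOn ℝ (⊤ : ℕ∞) g U)
    (c c' : ℂ) (j j' : Fin n) {z : Fin n → ℂ} (hz : z ∈ U) :
    Wg c j (Wg c' j' g) z = Wg c' j' (Wg c j g) z := by
  have e1 : ∀ (a : ℂ) (k k' : Fin n) (u : Fin n → ℂ),
      fderiv ℝ (Wg a k g) z u
        = (fderiv ℝ (fun y => fderiv ℝ g y (Pi.single k 1)) z u
            + a * fderiv ℝ (fun y => fderiv ℝ g y (Pi.single k Complex.I)) z u) / 2 := by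
    intro a k k' u
    exact fderiv_comb hU (smooth_Dv hU hg _) (smooth_Dv hU hg _) a hz u
  show (fderiv ℝ (Wg c' j' g) z _ + c * fderiv ℝ (Wg c' j' g) z _) / 2
      = (fderiv ℝ (Wg c j g) z _ + c' * fderiv ℝ (Wg c j g) z _) / 2
  rw [e1 c' j' j', e1 c' j' j', e1 c j j, e1 c j j,
    Dv_swap hU hg hz (Pi.single j 1) (Pi.single j' 1),
    Dv_swap hU hg hz (Pi.single j 1) (Pi.single j' Complex.I),
    Dv_swap hU hg hz (Pi.single j Complex.I) (Pi.single j' 1),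
    Dv_swap hU hg hz (Pi.single j Complex.I) (Pi.single j' Complex.I)]
  ring

theorem Wg_mul (hU : IsOpen U) {a b : (Fin n → ℂ) → ℂ} (ha : ContDiffOn ℝ (⊤ : ℕ∞) a U)
    (hb : ContDiffOn ℝ (⊤ : ℕ∞) b U) (c : ℂ) (j : Fin n) {z : Fin n → ℂ} (hz : z ∈ U) :
    Wg c j (fun y => a y * b y) z = a z * Wg c j b z + b z * Wg c j a z := by
  have h1 := diffAt hU ha hz
  have h2 := diffAt hU hb hz
  simp only [Wg, fderiv_fun_mul h1 h2]
  simp [smul_eq_mul]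
  ring

theorem Wg_sum (hU : IsOpen U) {σ : Type*} (s : Finset σ) {G : σ → (Fin n → ℂ) → ℂ}
    (hG : ∀ t ∈ s, ContDiffOn ℝ (⊤ : ℕ∞) (G t) U) (c : ℂ) (j : Fin n) {z : Fin n → ℂ} (hz : z ∈ U) :
    Wg c j (fun y => ∑ t ∈ s, G t y) z = ∑ t ∈ s, Wg c j (G t) z := by
  have hd : ∀ t ∈ s, DifferentiableAt ℝ (G t) z := fun t ht => diffAt hU (hG t ht) hz
  simp only [Wg, fderiv_fun_sum hd, ContinuousLinearMap.sum_apply]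
  rw [Finset.mul_sum, ← Finset.sum_add_distrib, ← Finset.sum_div]


noncomputable def foldWg (c : ℂ) (l : List (Fin n)) (γ : Fin n → ℕ)
    (g : (Fin n → ℂ) → ℂ) : (Fin n → ℂ) → ℂ :=
  l.foldr (fun j h => (Wg c j)^[γ j] h) g

theorem smooth_iter (hU : IsOpen U) (c : ℂ) (j : Fin n) (p : ℕ) {g : (Fin n → ℂ) → ℂ}
    (hg : ContDiffOn ℝ (⊤ : ℕ∞) g U) : ContDiffOn ℝ (⊤ : ℕ∞) ((Wg c j)^[p] g) U := by
  induction p with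
  | zero => exact hg
  | succ p ih => rw [Function.iterate_succ_apply']; exact smooth_Wg hU ih c j

theorem iter_congr (hU : IsOpen U) (c : ℂ) (j : Fin n) (p : ℕ) {g h : (Fin n → ℂ) → ℂ}
    (hgh : EqOn g h U) : EqOn ((Wg c j)^[p] g) ((Wg c j)^[p] h) U := by
  induction p with
  | zero => exact hgh
  | succ p ih => rw [Function.iterate_succ_apply', Function.iterate_succ_apply']
                 exact Wg_congr hU ih c j

theorem smooth_foldWg (hU : IsOpen U) (c : ℂ) (l : List (Fin n)) (γ : Fin n → ℕ)
    {g : (Fin n → ℂ) → ℂ} (hg : ContDiffOn ℝ (⊤ : ℕ∞) g U) : ContDiffOn ℝ (⊤ : ℕ∞) (foldWg c l γ g) U := by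
  induction l with
  | nil => exact hg
  | cons k t ih => exact smooth_iter hU c k (γ k) ih

theorem comm_iter (hU : IsOpen U) (c c' : ℂ) (j k : Fin n) (p : ℕ) {g : (Fin n → ℂ) → ℂ}
    (hg : ContDiffOn ℝ (⊤ : ℕ∞) g U) :
    EqOn (Wg c j ((Wg c' k)^[p] g)) ((Wg c' k)^[p] (Wg c j g)) U := by
  induction p with
  | zero => exact fun z _ => rfl
  | succ p ih =>
      rw [Function.iterate_succ_apply', Function.iterate_succ_apply']
      intro z hz
      calc Wg c j (Wg c' k ((Wg c' k)^[p] g)) z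
          = Wg c' k (Wg c j ((Wg c' k)^[p] g)) z :=
            Wg_swap hU (smooth_iter hU c' k p hg) c c' j k hz
        _ = Wg c' k ((Wg c' k)^[p] (Wg c j g)) z := Wg_congr hU ih c' k hz

theorem comm_foldWg (hU : IsOpen U) (c c' : ℂ) (j : Fin n) (l : List (Fin n)) (γ : Fin n → ℕ)
    {g : (Fin n → ℂ) → ℂ} (hg : ContDiffOn ℝ (⊤ : ℕ∞) g U) :
    EqOn (Wg c j (foldWg c' l γ g)) (foldWg c' l γ (Wg c j g)) U := by
  induction l with
  | nil => exact fun z _ => rfl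
  | cons k t ih =>
      intro z hz
      calc Wg c j ((Wg c' k)^[γ k] (foldWg c' t γ g)) z
          = (Wg c' k)^[γ k] (Wg c j (foldWg c' t γ g)) z :=
            comm_iter hU c c' j k (γ k) (smooth_foldWg hU c' t γ hg) hz
        _ = (Wg c' k)^[γ k] (foldWg c' t γ (Wg c j g)) z := iter_congr hU c' k (γ k) ih hz

theorem foldWg_exponent_congr (c : ℂ) (l : List (Fin n)) {γ δ : Fin n → ℕ}
    (h : ∀ i ∈ l, γ i = δ i) (g : (Fin n → ℂ) → ℂ) : foldWg c l γ g = foldWg c l δ g := by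
  induction l with
  | nil => rfl
  | cons k t ih =>
      show (Wg c k)^[γ k] (foldWg c t γ g) = (Wg c k)^[δ k] (foldWg c t δ g)
      rw [h k List.mem_cons_self, ih fun i hi => h i (List.mem_cons_of_mem k hi)]

theorem foldWg_zero (c : ℂ) (l : List (Fin n)) (g : (Fin n → ℂ) → ℂ) :
    foldWg c l 0 g = g := by
  induction l with
  | nil => rfl
  | cons k t ih => show (Wg c k)^[(0 : Fin n → ℕ) k] (foldWg c t 0 g) = g
                   rw [ih]; rfl

theorem foldWg_cons (c : ℂ) (k : Fin n) (t : List (Fin n)) (γ : Fin n → ℕ)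
    (g : (Fin n → ℂ) → ℂ) : foldWg c (k :: t) γ g = (Wg c k)^[γ k] (foldWg c t γ g) := rfl

theorem foldWg_insert (hU : IsOpen U) (c : ℂ) {l : List (Fin n)} (hl : l.Nodup) {j : Fin n}
    (hj : j ∈ l) (γ : Fin n → ℕ) {g : (Fin n → ℂ) → ℂ} (hg : ContDiffOn ℝ (⊤ : ℕ∞) g U) :
    EqOn (foldWg c l (γ + Pi.single j 1) g) (Wg c j (foldWg c l γ g)) U := by
  induction l with
  | nil => exact absurd hj List.not_mem_nil
  | cons k t ih =>
      rcases List.nodup_cons.1 hl with ⟨hkt, hnd⟩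
      by_cases hkj : k = j
      · subst hkj
        have hjt : k ∉ t := hkt
        have h1 : foldWg c t (γ + Pi.single k 1) g = foldWg c t γ g :=
          foldWg_exponent_congr c t (fun i hi => by
            have hik : i ≠ k := fun h => hjt (h ▸ hi)
            simp [Pi.single_eq_of_ne hik]) g
        intro z hz
        have h2 : ((γ + Pi.single k 1 : Fin n → ℕ)) k = γ k + 1 := by simp
        rw [foldWg_cons, foldWg_cons, h1, h2, Function.iterate_succ_apply']
      · have hjt : j ∈ t := by
          rcases List.mem_cons.1 hj with h | h
          · exact absurd h.symm hkj
          · exact h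
        intro z hz
        have h2 : ((γ + Pi.single j 1 : Fin n → ℕ)) k = γ k := by
          simp [Pi.single_apply, hkj, Ne.symm hkj]
        rw [foldWg_cons, foldWg_cons, h2]
        calc (Wg c k)^[γ k] (foldWg c t (γ + Pi.single j 1) g) z
            = (Wg c k)^[γ k] (Wg c j (foldWg c t γ g)) z :=
              iter_congr hU c k (γ k) (ih hnd hjt) hz
          _ = Wg c j ((Wg c k)^[γ k] (foldWg c t γ g)) z :=
              ((comm_iter hU c c j k (γ k) (smooth_foldWg hU c t γ hg)) hz).symm



/- derived multi lemmas -/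
theorem multi_eq_fold {n : ℕ} (γ : Fin n → ℕ) (g : (Fin n → ℂ) → ℂ) :
    wirtingerZMulti n γ g = foldWg (-Complex.I) (List.finRange n) γ g := by
  simp only [wirtingerZMulti, wirtingerZ_eq]; rfl

theorem smooth_multi (hU : IsOpen U) (γ : Fin n → ℕ) {g : (Fin n → ℂ) → ℂ}
    (hg : ContDiffOn ℝ (⊤ : ℕ∞) g U) : ContDiffOn ℝ (⊤ : ℕ∞) (wirtingerZMulti n γ g) U := by
  rw [multi_eq_fold]; exact smooth_foldWg hU _ _ γ hg

theorem multi_zero {n : ℕ} (g : (Fin n → ℂ) → ℂ) : wirtingerZMulti n 0 g = g := by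
  rw [multi_eq_fold]; exact foldWg_zero _ _ g

theorem multi_insert (hU : IsOpen U) (γ : Fin n → ℕ) (j : Fin n) {g : (Fin n → ℂ) → ℂ}
    (hg : ContDiffOn ℝ (⊤ : ℕ∞) g U) :
    EqOn (wirtingerZMulti n (γ + Pi.single j 1) g) (wirtingerZ n j (wirtingerZMulti n γ g)) U := by
  rw [multi_eq_fold, multi_eq_fold, wirtingerZ_eq]
  exact foldWg_insert hU _ (List.nodup_finRange n) (List.mem_finRange j) γ hg

theorem comm_bar_multi (hU : IsOpen U) (i : Fin n) (γ : Fin n → ℕ) {g : (Fin n → ℂ) → ℂ}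
    (hg : ContDiffOn ℝ (⊤ : ℕ∞) g U) :
    EqOn (wirtingerZBar n i (wirtingerZMulti n γ g))
      (wirtingerZMulti n γ (wirtingerZBar n i g)) U := by
  rw [multi_eq_fold, multi_eq_fold, wirtingerZBar_eq]
  exact comm_foldWg hU _ _ i _ γ hg

/- the representation predicate -/
def Rep (n : ℕ) (U : Set (Fin n → ℂ)) (f : (Fin n → ℂ) → ℂ) (k : ℕ)
    (g : (Fin n → ℂ) → ℂ) : Prop :=
  ContDiffOn ℝ (⊤ : ℕ∞) g U ∧ ∃ (ι : Type) (_ : Fintype ι) (d : ι → Fin n → ℕ)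
    (c : ι → (Fin n → ℂ) → ℂ),
    (∀ t, ContDiffOn ℝ (⊤ : ℕ∞) (c t) U) ∧ (∀ t, (∑ j, d t j) ≤ k) ∧
    ∀ z ∈ U, g z = ∑ t, c t z * wirtingerZMulti n (d t) f z

variable {f : (Fin n → ℂ) → ℂ} {k k' : ℕ}

theorem Rep.smooth {g : (Fin n → ℂ) → ℂ} (h : Rep n U f k g) : ContDiffOn ℝ (⊤ : ℕ∞) g U := h.1

theorem rep_mono {g : (Fin n → ℂ) → ℂ} (hkk : k ≤ k') (h : Rep n U f k g) : Rep n U f k' g := by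
  obtain ⟨hs, ι, _, d, c, hc, hd, hrepr⟩ := h
  exact ⟨hs, ι, ‹_›, d, c, hc, fun t => (hd t).trans hkk, hrepr⟩

theorem rep_congr {g h : (Fin n → ℂ) → ℂ} (hg : ContDiffOn ℝ (⊤ : ℕ∞) g U) (heq : EqOn g h U)
    (hh : Rep n U f k h) : Rep n U f k g := by
  obtain ⟨hs, ι, _, d, c, hc, hd, hrepr⟩ := hh
  exact ⟨hg, ι, ‹_›, d, c, hc, hd, fun z hz => (heq hz).trans (hrepr z hz)⟩

theorem rep_zero : Rep n U f k (fun _ => 0) := by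
  refine ⟨contDiffOn_const, PEmpty, inferInstance, fun t => 0, fun t => 0,
    fun t => contDiffOn_const, fun t => by simp, fun z hz => by simp⟩

theorem rep_add {g h : (Fin n → ℂ) → ℂ} (hg : Rep n U f k g) (hh : Rep n U f k h) :
    Rep n U f k (fun z => g z + h z) := by
  obtain ⟨hs, ι, _, d, c, hc, hd, hrepr⟩ := hg
  obtain ⟨hs', ι', _, d', c', hc', hd', hrepr'⟩ := hh
  refine ⟨hs.add hs', ι ⊕ ι', inferInstance, Sum.elim d d', Sum.elim c c', ?_, ?_, ?_⟩
  · rintro (t | t); exacts [hc t, hc' t]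
  · rintro (t | t); exacts [hd t, hd' t]
  · intro z hz
    rw [Fintype.sum_sum_type]
    simp only [Sum.elim_inl, Sum.elim_inr]
    rw [hrepr z hz, hrepr' z hz]

theorem rep_sum {σ : Type} (s : Finset σ) (G : σ → (Fin n → ℂ) → ℂ)
    (hG : ∀ t ∈ s, Rep n U f k (G t)) : Rep n U f k (fun z => ∑ t ∈ s, G t z) := by
  classical
  induction s using Finset.induction_on with
  | empty => simpa using (rep_zero : Rep n U f k _)
  | insert _ _ hns ih =>
      rename_i a s
      simp only [Finset.sum_insert hns]
      exact rep_add (hG a (Finset.mem_insert_self a s))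
        (ih fun t ht => hG t (Finset.mem_insert_of_mem ht))

theorem rep_smul {c : (Fin n → ℂ) → ℂ} {g : (Fin n → ℂ) → ℂ} (hc : ContDiffOn ℝ (⊤ : ℕ∞) c U)
    (hg : Rep n U f k g) : Rep n U f k (fun z => c z * g z) := by
  obtain ⟨hs, ι, _, d, co, hco, hd, hrepr⟩ := hg
  refine ⟨hc.mul hs, ι, ‹_›, d, fun t z => c z * co t z, fun t => hc.mul (hco t), hd, ?_⟩
  intro z hz
  simp only []
  rw [hrepr z hz, Finset.mul_sum]
  simp only [mul_assoc]

theorem rep_basic (hU : IsOpen U) (hf : ContDiffOn ℝ (⊤ : ℕ∞) f U) (γ : Fin n → ℕ)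
    (hγ : (∑ j, γ j) ≤ k) : Rep n U f k (wirtingerZMulti n γ f) := by
  refine ⟨smooth_multi hU γ hf, PUnit, inferInstance, fun _ => γ, fun _ _ => 1,
    fun t => contDiffOn_const, fun t => hγ, fun z hz => by simp⟩


theorem rep_Wz (hU : IsOpen U) (hf : ContDiffOn ℝ (⊤ : ℕ∞) f U) (j : Fin n)
    {g : (Fin n → ℂ) → ℂ} (hg : Rep n U f k g) : Rep n U f (k + 1) (wirtingerZ n j g) := by
  obtain ⟨hs, ι, _, d, c, hc, hd, hrepr⟩ := hg
  have hbas : ∀ t, ContDiffOn ℝ (⊤ : ℕ∞) (wirtingerZMulti n (d t) f) U :=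
    fun t => smooth_multi hU _ hf
  have hdeg : ∀ t, (∑ j', ((d t + Pi.single j 1 : Fin n → ℕ)) j') = (∑ j', d t j') + 1 := by
    intro t
    have h1 : (∑ j', Pi.single j (1 : ℕ) j') = 1 := by simp
    simp [Finset.sum_add_distrib, h1]
  have hins : ∀ t, ∀ z ∈ U, Wg (-Complex.I) j (wirtingerZMulti n (d t) f) z
      = wirtingerZMulti n (d t + Pi.single j 1) f z := by
    intro t z hz
    rw [← wirtingerZ_eq]
    exact (multi_insert hU (d t) j hf hz).symm
  have hrepH : Rep n U f (k + 1) (fun z => ∑ t,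
      (c t z * wirtingerZMulti n (d t + Pi.single j 1) f z
        + Wg (-Complex.I) j (c t) z * wirtingerZMulti n (d t) f z)) := by
    refine rep_sum Finset.univ _ fun t _ => rep_add ?_ ?_
    · exact rep_smul (hc t) (rep_basic hU hf _ (by have := hd t; rw [hdeg t]; omega))
    · exact rep_smul (smooth_Wg hU (hc t) _ j) (rep_basic hU hf _ ((hd t).trans (by omega)))
  refine rep_congr ?_ ?_ hrepH
  · rw [wirtingerZ_eq]; exact smooth_Wg hU hs _ j
  · intro z hz
    rw [wirtingerZ_eq]
    calc Wg (-Complex.I) j g z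
        = Wg (-Complex.I) j (fun y => ∑ t, c t y * wirtingerZMulti n (d t) f y) z :=
          Wg_congr hU (fun y hy => hrepr y hy) _ j hz
      _ = ∑ t, Wg (-Complex.I) j (fun y => c t y * wirtingerZMulti n (d t) f y) z :=
          Wg_sum hU Finset.univ (fun t _ => (hc t).mul (hbas t)) _ j hz
      _ = ∑ t, (c t z * wirtingerZMulti n (d t + Pi.single j 1) f z
            + Wg (-Complex.I) j (c t) z * wirtingerZMulti n (d t) f z) := by
          refine Finset.sum_congr rfl fun t _ => ?_
          rw [Wg_mul hU (hc t) (hbas t) _ j hz, hins t z hz]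
          ring

theorem rep_iter (hU : IsOpen U) (hf : ContDiffOn ℝ (⊤ : ℕ∞) f U) (j : Fin n) (p : ℕ) :
    ∀ {k : ℕ} {g : (Fin n → ℂ) → ℂ}, Rep n U f k g →
      Rep n U f (k + p) ((wirtingerZ n j)^[p] g) := by
  induction p with
  | zero => intro k g hg; simpa using hg
  | succ p ih =>
      intro k g hg
      rw [Function.iterate_succ_apply']
      exact rep_Wz hU hf j (ih hg)

theorem rep_fold (hU : IsOpen U) (hf : ContDiffOn ℝ (⊤ : ℕ∞) f U) (γ : Fin n → ℕ)
    (l : List (Fin n)) :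
    ∀ {k : ℕ} {g : (Fin n → ℂ) → ℂ}, Rep n U f k g →
      Rep n U f (k + (l.map γ).sum) (l.foldr (fun j h => (wirtingerZ n j)^[γ j] h) g) := by
  induction l with
  | nil => intro k g hg; simpa using hg
  | cons j t ih =>
      intro k g hg
      have := rep_iter hU hf j (γ j) (ih hg)
      refine rep_mono (by simp only [List.map_cons, List.sum_cons]; omega) this

theorem rep_WzMulti (hU : IsOpen U) (hf : ContDiffOn ℝ (⊤ : ℕ∞) f U) (γ : Fin n → ℕ)
    {g : (Fin n → ℂ) → ℂ} (hg : Rep n U f k g) :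
    Rep n U f (k + ∑ j, γ j) (wirtingerZMulti n γ g) := by
  have h := rep_fold hU hf γ (List.finRange n) hg
  rwa [show ((List.finRange n).map γ).sum = ∑ j, γ j from (Fin.sum_univ_def γ).symm] at h

theorem rep_Wbar (hU : IsOpen U) (hf : ContDiffOn ℝ (⊤ : ℕ∞) f U) (i : Fin n)
    (hB : Rep n U f 1 (wirtingerZBar n i f)) {g : (Fin n → ℂ) → ℂ}
    (hg : Rep n U f k g) : Rep n U f (k + 1) (wirtingerZBar n i g) := by
  obtain ⟨hs, ι, _, d, c, hc, hd, hrepr⟩ := hg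
  have hbas : ∀ t, ContDiffOn ℝ (⊤ : ℕ∞) (wirtingerZMulti n (d t) f) U :=
    fun t => smooth_multi hU _ hf
  have hK : ∀ t, Rep n U f ((∑ j', d t j') + 1)
      (wirtingerZBar n i (wirtingerZMulti n (d t) f)) := by
    intro t
    refine rep_congr ?_ (comm_bar_multi hU i (d t) hf) ?_
    · rw [wirtingerZBar_eq]; exact smooth_Wg hU (hbas t) _ i
    · refine rep_mono (by omega) (rep_WzMulti hU hf (d t) hB)
  have hrepH : Rep n U f (k + 1) (fun z => ∑ t,
      (c t z * wirtingerZBar n i (wirtingerZMulti n (d t) f) z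
        + Wg Complex.I i (c t) z * wirtingerZMulti n (d t) f z)) := by
    refine rep_sum Finset.univ _ fun t _ => rep_add ?_ ?_
    · exact rep_smul (hc t) (rep_mono (by have := hd t; omega) (hK t))
    · exact rep_smul (smooth_Wg hU (hc t) _ i) (rep_basic hU hf _ ((hd t).trans (by omega)))
  refine rep_congr ?_ ?_ hrepH
  · rw [wirtingerZBar_eq]; exact smooth_Wg hU hs _ i
  · intro z hz
    rw [wirtingerZBar_eq]
    calc Wg Complex.I i g z
        = Wg Complex.I i (fun y => ∑ t, c t y * wirtingerZMulti n (d t) f y) z :=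
          Wg_congr hU (fun y hy => hrepr y hy) _ i hz
      _ = ∑ t, Wg Complex.I i (fun y => c t y * wirtingerZMulti n (d t) f y) z :=
          Wg_sum hU Finset.univ (fun t _ => (hc t).mul (hbas t)) _ i hz
      _ = ∑ t, (c t z * wirtingerZBar n i (wirtingerZMulti n (d t) f) z
            + Wg Complex.I i (c t) z * wirtingerZMulti n (d t) f z) := by
          refine Finset.sum_congr rfl fun t _ => ?_
          rw [Wg_mul hU (hc t) (hbas t) _ i hz, wirtingerZBar_eq]
          ring

theorem rep_iter_bar (hU : IsOpen U) (hf : ContDiffOn ℝ (⊤ : ℕ∞) f U) (i : Fin n)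
    (hB : ∀ i' : Fin n, Rep n U f 1 (wirtingerZBar n i' f)) (p : ℕ) :
    ∀ {k : ℕ} {g : (Fin n → ℂ) → ℂ}, Rep n U f k g →
      Rep n U f (k + p) ((wirtingerZBar n i)^[p] g) := by
  induction p with
  | zero => intro k g hg; simpa using hg
  | succ p ih =>
      intro k g hg
      rw [Function.iterate_succ_apply']
      exact rep_Wbar hU hf i (hB i) (ih hg)

theorem rep_WbarMulti (hU : IsOpen U) (hf : ContDiffOn ℝ (⊤ : ℕ∞) f U)
    (hB : ∀ i' : Fin n, Rep n U f 1 (wirtingerZBar n i' f)) (γ : Fin n → ℕ)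
    {g : (Fin n → ℂ) → ℂ} (hg : Rep n U f k g) :
    Rep n U f (k + ∑ j, γ j) (wirtingerZBarMulti n γ g) := by
  have main : ∀ (l : List (Fin n)) {k : ℕ} {g : (Fin n → ℂ) → ℂ}, Rep n U f k g →
      Rep n U f (k + (l.map γ).sum) (l.foldr (fun j h => (wirtingerZBar n j)^[γ j] h) g) := by
    intro l
    induction l with
    | nil => intro k g hg; simpa using hg
    | cons j t ih =>
        intro k g hg
        have := rep_iter_bar hU hf j hB (γ j) (ih hg)
        refine rep_mono (by simp only [List.map_cons, List.sum_cons]; omega) this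
  have h := main (List.finRange n) hg
  rwa [show ((List.finRange n).map γ).sum = ∑ j, γ j from (Fin.sum_univ_def γ).symm] at h

theorem rep_eval {m : ℕ} (h0 : (0 : Fin n → ℂ) ∈ U)
    (hvanish : ∀ α : Fin n → ℕ, (∑ j, α j) ≤ m → wirtingerZMulti n α f 0 = 0)
    {g : (Fin n → ℂ) → ℂ} (hg : Rep n U f k g) (hk : k ≤ m) : g 0 = 0 := by
  obtain ⟨_, ι, _, d, c, hc, hd, hrepr⟩ := hg
  rw [hrepr 0 h0]
  exact Finset.sum_eq_zero fun t _ => by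
    rw [hvanish (d t) ((hd t).trans hk), mul_zero]

theorem rep_f (hU : IsOpen U) (hf : ContDiffOn ℝ (⊤ : ℕ∞) f U) : Rep n U f 0 f := by
  refine ⟨hf, PUnit, inferInstance, fun _ => 0, fun _ _ => 1,
    fun t => contDiffOn_const, fun t => by simp, fun z hz => by simp [multi_zero]⟩


theorem Dv_decomp {g : (Fin n → ℂ) → ℂ} {z : Fin n → ℂ} (hg : DifferentiableAt ℝ g z)
    (v : Fin n → ℂ) :
    fderiv ℝ g z v = ∑ j, (v j * wirtingerZ n j g z
      + (starRingEnd ℂ) (v j) * wirtingerZBar n j g z) := by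
  have hv : v = ∑ j, ((v j).re • (Pi.single j (1 : ℂ) : Fin n → ℂ) + (v j).im • (Pi.single j Complex.I : Fin n → ℂ)) := by
    funext i
    rw [Finset.sum_apply]
    rw [Finset.sum_eq_single i]
    · simp [Complex.real_smul, Complex.re_add_im]
    · intro b _ hbi
      simp [Pi.single_eq_of_ne (Ne.symm hbi)]
    · simp
  conv_lhs => rw [hv]
  rw [map_sum]
  refine Finset.sum_congr rfl fun j _ => ?_
  rw [map_add, _root_.map_smul, _root_.map_smul]
  set a := fderiv ℝ g z (Pi.single j (1 : ℂ)) with ha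
  set b := fderiv ℝ g z (Pi.single j Complex.I) with hb
  show (v j).re • a + (v j).im • b = v j * ((a - Complex.I * b) / 2)
    + (starRingEnd ℂ) (v j) * ((a + Complex.I * b) / 2)
  set x := v j
  have hx : (x.re : ℂ) + (x.im : ℂ) * Complex.I = x := Complex.re_add_im x
  have hcx : (starRingEnd ℂ) x = (x.re : ℂ) - (x.im : ℂ) * Complex.I := by
    simp [Complex.ext_iff]
  rw [Complex.real_smul, Complex.real_smul]
  linear_combination ((a - Complex.I * b) / 2) * hx - ((a + Complex.I * b) / 2) * hcx
    + (x.im : ℂ) * b * Complex.I_sq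


noncomputable def nest (n : ℕ) : (k : ℕ) → (Fin k → (Fin n → ℂ)) →
    ((Fin n → ℂ) → ℂ) → ((Fin n → ℂ) → ℂ)
  | 0, _, g => g
  | (k + 1), v, g => fun z => fderiv ℝ (nest n k (Fin.tail v) g) z (v 0)

theorem iter_eq_nest (hU : IsOpen U) : ∀ (k : ℕ) {g : (Fin n → ℂ) → ℂ}
    (_ : ContDiffOn ℝ (⊤ : ℕ∞) g U) (v : Fin k → (Fin n → ℂ)) {z : Fin n → ℂ} (_ : z ∈ U),
    iteratedFDeriv ℝ k g z v = nest n k v g z := by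
  intro k
  induction k with
  | zero => intro g hg v z hz; simp [nest]
  | succ k ih =>
      intro g hg v z hz
      rw [iteratedFDeriv_succ_apply_left]
      have hsm : DifferentiableAt ℝ (iteratedFDeriv ℝ k g) z := by
        have h1 : DifferentiableOn ℝ (iteratedFDerivWithin ℝ k g U) U :=
          hg.differentiableOn_iteratedFDerivWithin (by exact_mod_cast ENat.coe_lt_top k) hU.uniqueDiffOn
        have h2 : DifferentiableOn ℝ (iteratedFDeriv ℝ k g) U :=
          h1.congr fun x hx => (iteratedFDerivWithin_of_isOpen k hU hx).symm
        exact h2.differentiableAt (hU.mem_nhds hz)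
      have key : (fderiv ℝ (iteratedFDeriv ℝ k g) z (v 0)) (Fin.tail v)
          = fderiv ℝ (fun y => iteratedFDeriv ℝ k g y (Fin.tail v)) z (v 0) := by
        set L := ContinuousMultilinearMap.apply ℝ (fun _ : Fin k => (Fin n → ℂ)) ℂ
          (Fin.tail v) with hL
        have hc : fderiv ℝ (fun y => L (iteratedFDeriv ℝ k g y)) z
            = L.comp (fderiv ℝ (iteratedFDeriv ℝ k g) z) :=
          (L.hasFDerivAt.comp z hsm.hasFDerivAt).fderiv
        have := congrArg (fun T : (Fin n → ℂ) →L[ℝ] ℂ => T (v 0)) hc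
        simp only [ContinuousLinearMap.coe_comp', Function.comp_apply] at this
        exact (this.trans rfl).symm
      rw [key]
      have heq : EqOn (fun y => iteratedFDeriv ℝ k g y (Fin.tail v))
          (nest n k (Fin.tail v) g) U := fun y hy => ih hg (Fin.tail v) hy
      rw [fderiv_eqOn hU heq hz]
      rfl

theorem rep_Wzf (hU : IsOpen U) (hf : ContDiffOn ℝ (⊤ : ℕ∞) f U) (j : Fin n) :
    Rep n U f 1 (wirtingerZ n j f) := by
  have eq1 : EqOn (wirtingerZ n j f) (wirtingerZMulti n (Pi.single j 1) f) U := by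
    intro z hz
    have h := multi_insert hU 0 j hf hz
    rw [multi_zero, zero_add] at h
    exact h.symm
  refine rep_congr ?_ eq1 (rep_basic hU hf (Pi.single j 1) (by simp))
  rw [wirtingerZ_eq]; exact smooth_Wg hU hf _ j

theorem rep_Dv (hU : IsOpen U) (hf : ContDiffOn ℝ (⊤ : ℕ∞) f U)
    (hB : ∀ i : Fin n, Rep n U f 1 (wirtingerZBar n i f)) (v : Fin n → ℂ)
    {g : (Fin n → ℂ) → ℂ} (hg : Rep n U f k g) :
    Rep n U f (k + 1) (fun z => fderiv ℝ g z v) := by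
  have hH : Rep n U f (k + 1) (fun z => ∑ j, (v j * wirtingerZ n j g z
      + (starRingEnd ℂ) (v j) * wirtingerZBar n j g z)) := by
    refine rep_sum Finset.univ _ fun j _ => rep_add ?_ ?_
    · exact rep_smul contDiffOn_const (rep_Wz hU hf j hg)
    · exact rep_smul contDiffOn_const (rep_Wbar hU hf j (hB j) hg)
  refine rep_congr (smooth_Dv hU hg.smooth v) ?_ hH
  intro z hz
  exact Dv_decomp (diffAt hU hg.smooth hz) v

theorem rep_nest (hU : IsOpen U) (hf : ContDiffOn ℝ (⊤ : ℕ∞) f U)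
    (hB : ∀ i : Fin n, Rep n U f 1 (wirtingerZBar n i f)) :
    ∀ (p : ℕ) (v : Fin p → (Fin n → ℂ)) {k : ℕ} {g : (Fin n → ℂ) → ℂ},
      Rep n U f k g → Rep n U f (k + p) (nest n p v g) := by
  intro p
  induction p with
  | zero => intro v k g hg; simpa [nest] using hg
  | succ p ih =>
      intro v k g hg
      have h1 := ih (Fin.tail v) hg
      have h2 := rep_Dv hU hf hB (v 0) h1
      exact rep_mono (by omega) h2

end S10

/-- Let `U ⊆ ℂⁿ` be an open neighborhood of `0`, let `f : U → ℂ` and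
`A : U → Matrix(n,n,ℂ)` be smooth with `∂f/∂z̄ᵢ = Σⱼ Aᵢⱼ·∂f/∂zⱼ` on `U`. If all pure
holomorphic derivatives `∂^{|α|}f/∂z^α` with `|α| ≤ m` vanish at `0`, then all mixed
Wirtinger derivatives `∂^{|α|+|β|}f/∂z^α∂z̄^β` with `|α| + |β| ≤ m` vanish at `0`;
consequently every (real, iterated Fréchet) derivative of `f` at `0` of order `≤ m`
vanishes, i.e. `f` vanishes to order at least `m + 1` at `0`. -/
theorem stmt10 (n m : ℕ) (U : Set (Fin n → ℂ)) (f : (Fin n → ℂ) → ℂ)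
    (A : (Fin n → ℂ) → Matrix (Fin n) (Fin n) ℂ)
    (hU : IsOpen U) (h0 : (0 : Fin n → ℂ) ∈ U)
    (hf : ContDiffOn ℝ (⊤ : ℕ∞) f U)
    (hA : ∀ i j : Fin n, ContDiffOn ℝ (⊤ : ℕ∞) (fun z => A z i j) U)
    (hrel : ∀ z ∈ U, ∀ i : Fin n,
      wirtingerZBar n i f z = ∑ j : Fin n, A z i j * wirtingerZ n j f z)
    (hvanish : ∀ α : Fin n → ℕ, (∑ j, α j) ≤ m → wirtingerZMulti n α f 0 = 0) :
    (∀ α β : Fin n → ℕ, (∑ j, α j) + (∑ j, β j) ≤ m →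
        wirtingerZMulti n α (wirtingerZBarMulti n β f) 0 = 0) ∧
      ∀ k : ℕ, k ≤ m → iteratedFDeriv ℝ k f 0 = 0 := by
  have hB : ∀ i : Fin n, S10.Rep n U f 1 (wirtingerZBar n i f) := by
    intro i
    refine S10.rep_congr ?_ (fun z hz => hrel z hz i) ?_
    · rw [S10.wirtingerZBar_eq]; exact S10.smooth_Wg hU hf _ i
    · exact S10.rep_sum Finset.univ _ fun j _ =>
        S10.rep_smul (hA i j) (S10.rep_Wzf hU hf j)
  constructor
  · intro α β hαβ
    have r1 : S10.Rep n U f (0 + ∑ j, β j) (wirtingerZBarMulti n β f) :=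
      S10.rep_WbarMulti hU hf hB β (S10.rep_f hU hf)
    have r2 : S10.Rep n U f (0 + (∑ j, β j) + ∑ j, α j)
        (wirtingerZMulti n α (wirtingerZBarMulti n β f)) :=
      S10.rep_WzMulti hU hf α r1
    exact S10.rep_eval h0 hvanish r2 (by omega)
  · intro k hk
    apply ContinuousMultilinearMap.ext
    intro v
    rw [ContinuousMultilinearMap.zero_apply, S10.iter_eq_nest hU k hf v h0]
    have r1 : S10.Rep n U f (0 + k) (S10.nest n k v f) :=
      S10.rep_nest hU hf hB k v (S10.rep_f hU hf)
    exact S10.rep_eval h0 hvanish r1 (by omega)
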